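/- Let b > 0 and let f : Ω×ℝ → ℝ be a Carathéodory function with f(x,t) = 0 for a.e. x ∈ Ω and all t ≤ 0, with f(x,b) ≤ 0 for a.e. x ∈ Ω, and with |f(x,t)| ≤ a_b(x) for a.e. x ∈ Ω and all t ∈ [0,b] for some a_b ∈ L^∞(Ω). Define f̌(x,t) = f(x, min{t, b}). Then every weak solution u ∈ W^{s,p}_0(Ω) of (−Δ)_p^s u = f̌(x,u) in Ω satisfies 0 ≤ u ≤ b a.e. in Ω; consequently u is a weak solution of (−Δ)_p^s u = f(x,u) in Ω. -/

import Mathlib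

open MeasureTheory Set Metric Bornology
open scoped ENNReal

noncomputable section

abbrev Eu (N : ℕ) := EuclideanSpace ℝ (Fin N)

/-- A bounded domain with `C^{1,1}` boundary: open, connected, bounded, and a level-set
description by a `C^1` function with Lipschitz derivative and nonvanishing gradient
on the boundary. -/
def IsC11Domain {N : ℕ} (Ω : Set (Eu N)) : Prop :=
  IsOpen Ω ∧ IsConnected Ω ∧ IsBounded Ω ∧
    ∃ f : Eu N → ℝ, ContDiff ℝ 1 f ∧ (∃ L : NNReal, LipschitzWith L (fderiv ℝ f)) ∧
      Ω = {x | f x < 0} ∧ ∀ x ∈ frontier Ω, fderiv ℝ f x ≠ 0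

/-- The `p`-th power of the Gagliardo seminorm, as an extended real. -/
def gagliardoE (N : ℕ) (s p : ℝ) (u : Eu N → ℝ) : ℝ≥0∞ :=
  ∫⁻ x, ∫⁻ y, ENNReal.ofReal (|u x - u y| ^ p / dist x y ^ ((N : ℝ) + p * s))

/-- Gagliardo seminorm (to the power 1) restricted to a region `A`. -/
def gagliardoOnE (N : ℕ) (s p : ℝ) (A : Set (Eu N)) (u : Eu N → ℝ) : ℝ≥0∞ :=
  ∫⁻ x in A, ∫⁻ y in A, ENNReal.ofReal (|u x - u y| ^ p / dist x y ^ ((N : ℝ) + p * s))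

/-- The norm `‖u‖ = [u]_{s,p}` of `W^{s,p}_0(Ω)`. -/
def fracNorm (N : ℕ) (s p : ℝ) (u : Eu N → ℝ) : ℝ :=
  (gagliardoE N s p u).toReal ^ (1 / p)

/-- Membership in `W^{s,p}_0(Ω)`. -/
def MemW0 (N : ℕ) (s p : ℝ) (Ω : Set (Eu N)) (u : Eu N → ℝ) : Prop :=
  MemLp u (ENNReal.ofReal p) volume ∧ gagliardoE N s p u < ⊤ ∧
    ∀ᵐ x, x ∉ Ω → u x = 0

/-- Membership in `W̃^{s,p}(Ω)`. -/
def MemWtilde (N : ℕ) (s p : ℝ) (Ω : Set (Eu N)) (u : Eu N → ℝ) : Prop :=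
  AEMeasurable u volume ∧
  (∀ K : Set (Eu N), IsCompact K → ∫⁻ x in K, ENNReal.ofReal (|u x| ^ p) < ⊤) ∧
  (∃ Ω' : Set (Eu N), IsOpen Ω' ∧ closure Ω ⊆ Ω' ∧
     (∫⁻ x in Ω', ENNReal.ofReal (|u x| ^ p)) < ⊤ ∧ gagliardoOnE N s p Ω' u < ⊤) ∧
  ∫⁻ x, ENNReal.ofReal (|u x| ^ (p - 1) / (1 + ‖x‖) ^ ((N : ℝ) + p * s)) < ⊤

/-- The weak pairing `⟨(-Δ)_p^s u, φ⟩`. -/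
def fracPairing (N : ℕ) (s p : ℝ) (u φ : Eu N → ℝ) : ℝ :=
  ∫ x, ∫ y, |u x - u y| ^ (p - 2) * (u x - u y) * (φ x - φ y) / dist x y ^ ((N : ℝ) + p * s)

/-- `u` is a weak solution of `(-Δ)_p^s u = g(x,u)` in `Ω`, `u = 0` in `Ω^c`. -/
def IsWeakSolution (N : ℕ) (s p : ℝ) (Ω : Set (Eu N)) (g : Eu N → ℝ → ℝ)
    (u : Eu N → ℝ) : Prop :=
  MemW0 N s p Ω u ∧
    ∀ φ : Eu N → ℝ, MemW0 N s p Ω φ →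
      fracPairing N s p u φ = ∫ x in Ω, g x (u x) * φ x

/-- Carathéodory function on `Ω × ℝ`. -/
def IsCaratheodory {N : ℕ} (Ω : Set (Eu N)) (f : Eu N → ℝ → ℝ) : Prop :=
  (∀ t : ℝ, Measurable fun x => f x t) ∧ ∀ᵐ x, x ∈ Ω → Continuous fun t => f x t

/-- Membership in `L^∞(Ω)`. -/
def MemLinftyOn {N : ℕ} (Ω : Set (Eu N)) (a : Eu N → ℝ) : Prop :=
  Measurable a ∧ ∃ C : ℝ, ∀ᵐ x, x ∈ Ω → |a x| ≤ C

/-- The principal eigenvalue `λ₁` of `(-Δ)_p^s` in `Ω`. -/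
def lambda1 (N : ℕ) (s p : ℝ) (Ω : Set (Eu N)) : ℝ :=
  sInf { r : ℝ | ∃ u : Eu N → ℝ, MemW0 N s p Ω u ∧ (0 < ∫ x in Ω, |u x| ^ p) ∧
    r = fracNorm N s p u ^ p / ∫ x in Ω, |u x| ^ p }

/-- The principal eigenvalue `λ₁(m)` with weight `m`. -/
def lambda1W (N : ℕ) (s p : ℝ) (Ω : Set (Eu N)) (m : Eu N → ℝ) : ℝ :=
  sInf { r : ℝ | ∃ u : Eu N → ℝ, MemW0 N s p Ω u ∧ (0 < ∫ x in Ω, m x * |u x| ^ p) ∧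
    r = fracNorm N s p u ^ p / ∫ x in Ω, m x * |u x| ^ p }

/-- The best Sobolev-type constant `c_q`. -/
def sobQuotInf (N : ℕ) (s p q : ℝ) (Ω : Set (Eu N)) : ℝ :=
  sInf { r : ℝ | ∃ u : Eu N → ℝ, MemW0 N s p Ω u ∧ ¬ (u =ᵐ[volume] (0 : Eu N → ℝ)) ∧
    r = fracNorm N s p u / (∫ x in Ω, |u x| ^ q) ^ (1 / q) }

/-- The fractional critical exponent `p*_s`. -/
def pstar (N : ℕ) (s p : ℝ) : ℝ := N * p / (N - p * s)

/-- The energy functional `Φ(u) = ‖u‖^p/p - ∫_Ω F(x,u) dx`. -/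
def energy (N : ℕ) (s p : ℝ) (Ω : Set (Eu N)) (f : Eu N → ℝ → ℝ) (u : Eu N → ℝ) : ℝ :=
  fracNorm N s p u ^ p / p - ∫ x in Ω, ∫ τ in (0:ℝ)..(u x), f x τ

/-!
Test the equation with `T ∘ u` for the truncations `T t = min t 0` and `T t = (t - b)⁺`,
both monotone and `1`-Lipschitz with `T 0 = 0`. Pointwise,
`|T a - T c| ^ p ≤ |a - c| ^ (p - 2) * (a - c) * (T a - T c)`, so
`[T ∘ u]_{s,p} ^ p ≤ ⟨(-Δ)_p^s u, T ∘ u⟩ = ∫_Ω f(x, min u b) T(u)`, and the sign conditions on `f`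
make the right-hand side nonpositive. Hence `T ∘ u` has zero seminorm, so it is a.e. constant;
as it vanishes off the bounded set `Ω`, it vanishes. This gives `0 ≤ u ≤ b`, where the truncated
and the original nonlinearity agree.
-/

lemma Real.rpow_eq_rpow_sub_one_mul_self {x p : ℝ} (hx : 0 ≤ x) (hp : 1 ≤ p) :
    x ^ p = x ^ (p - 1) * x := by
  rw [← Real.rpow_add_one' hx (by linarith), sub_add_cancel]

lemma Real.rpow_sub_one_mul_le_rpow_add_rpow {p x y : ℝ} (hp : 1 ≤ p) (hx : 0 ≤ x)
    (hy : 0 ≤ y) : x ^ (p - 1) * y ≤ x ^ p + y ^ p := by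
  rcases le_total y x with hyx | hxy
  · calc x ^ (p - 1) * y ≤ x ^ (p - 1) * x := by gcongr
      _ = x ^ p := (Real.rpow_eq_rpow_sub_one_mul_self hx hp).symm
      _ ≤ x ^ p + y ^ p := le_add_of_nonneg_right (by positivity)
  · calc x ^ (p - 1) * y ≤ y ^ (p - 1) * y := by gcongr
      _ = y ^ p := (Real.rpow_eq_rpow_sub_one_mul_self hy hp).symm
      _ ≤ x ^ p + y ^ p := le_add_of_nonneg_left (by positivity)

lemma abs_rpow_sub_two_mul_mul_le {p : ℝ} (hp : 1 ≤ p) (d e : ℝ) :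
    |(|d| ^ (p - 2) * d * e)| ≤ |d| ^ p + |e| ^ p := by
  rcases eq_or_ne d 0 with rfl | hd
  · simp only [mul_zero, zero_mul, abs_zero]
    positivity
  · have hpow : |d| ^ (p - 2) * |d| = |d| ^ (p - 1) := by
      rw [← Real.rpow_add_one (abs_ne_zero.2 hd)]
      ring_nf
    rw [abs_mul, abs_mul, abs_of_nonneg (by positivity : 0 ≤ |d| ^ (p - 2)), hpow]
    exact Real.rpow_sub_one_mul_le_rpow_add_rpow hp (abs_nonneg d) (abs_nonneg e)

lemma abs_sub_rpow_le_of_monotone_of_lipschitzWith_one {T : ℝ → ℝ} (hT : Monotone T)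
    (hTL : LipschitzWith 1 T) {p : ℝ} (hp : 1 ≤ p) (a c : ℝ) :
    |T a - T c| ^ p ≤ |a - c| ^ (p - 2) * (a - c) * (T a - T c) := by
  have hlip : |T a - T c| ≤ |a - c| := by
    simpa [Real.dist_eq] using hTL.dist_le_mul a c
  have hsign : 0 ≤ (a - c) * (T a - T c) := by
    rcases le_total a c with h | h
    · exact mul_nonneg_of_nonpos_of_nonpos (by linarith) (sub_nonpos.2 (hT h))
    · exact mul_nonneg (by linarith) (sub_nonneg.2 (hT h))
  rcases eq_or_ne a c with rfl | hac
  · simp [Real.zero_rpow (by linarith : p ≠ 0)]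
  have hd : |a - c| ≠ 0 := abs_ne_zero.2 (sub_ne_zero.2 hac)
  calc |T a - T c| ^ p = |T a - T c| ^ (p - 1) * |T a - T c| :=
        Real.rpow_eq_rpow_sub_one_mul_self (abs_nonneg _) hp
    _ ≤ |a - c| ^ (p - 1) * |T a - T c| := by gcongr
    _ = |a - c| ^ (p - 2) * (|a - c| * |T a - T c|) := by
        rw [← mul_assoc, ← Real.rpow_add_one hd]
        ring_nf
    _ = |a - c| ^ (p - 2) * (a - c) * (T a - T c) := by
        rw [← abs_mul, abs_of_nonneg hsign, mul_assoc]

lemma MeasureTheory.ae_eq_zero_of_ae_ae_eq {α β : Type*} [MeasurableSpace α] [Zero β]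
    {μ : Measure α} {v : α → β} {Ω : Set α} (hΩ : μ Ωᶜ ≠ 0)
    (hconst : ∀ᵐ x ∂μ, ∀ᵐ y ∂μ, v x = v y) (hzero : ∀ᵐ x ∂μ, x ∉ Ω → v x = 0) :
    v =ᵐ[μ] 0 := by
  have hgood : ¬ ∀ x ∈ Ωᶜ, ¬ ((∀ᵐ y ∂μ, v x = v y) ∧ (x ∉ Ω → v x = 0)) := fun h =>
    hΩ (measure_mono_null h (ae_iff.1 (hconst.and hzero)))
  push Not at hgood
  obtain ⟨x₀, hx₀Ω, hx₀const, hx₀zero⟩ := hgood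
  filter_upwards [hx₀const] with y hy
  rw [Pi.zero_apply, ← hy, hx₀zero hx₀Ω]

lemma Bornology.IsBounded.measure_compl_ne_zero {E : Type*} [NormedAddCommGroup E]
    [NormedSpace ℝ E] [Nontrivial E] [FiniteDimensional ℝ E] [MeasurableSpace E] [BorelSpace E]
    (μ : Measure E) [μ.IsAddHaarMeasure] {Ω : Set E} (hΩ : IsBounded Ω) : μ Ωᶜ ≠ 0 := by
  intro h
  have huniv := measure_univ_le_add_compl (μ := μ) Ω
  rw [h, add_zero, measure_univ_of_isAddLeftInvariant, top_le_iff] at huniv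
  exact hΩ.measure_lt_top.ne huniv

section Gagliardo

variable {N : ℕ} {s p : ℝ}

def gagliardoDensity (N : ℕ) (s p : ℝ) (v : Eu N → ℝ) (z : Eu N × Eu N) : ℝ :=
  |v z.1 - v z.2| ^ p / dist z.1 z.2 ^ ((N : ℝ) + p * s)

def pairingDensity (N : ℕ) (s p : ℝ) (u φ : Eu N → ℝ) (z : Eu N × Eu N) : ℝ :=
  |u z.1 - u z.2| ^ (p - 2) * (u z.1 - u z.2) * (φ z.1 - φ z.2) /
    dist z.1 z.2 ^ ((N : ℝ) + p * s)

lemma AEMeasurable.sub_comp_fst_snd {v : Eu N → ℝ} (hv : AEMeasurable v) :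
    AEMeasurable (fun z : Eu N × Eu N => v z.1 - v z.2) (volume.prod volume) :=
  (hv.comp_quasiMeasurePreserving Measure.quasiMeasurePreserving_fst).sub
    (hv.comp_quasiMeasurePreserving Measure.quasiMeasurePreserving_snd)

lemma aemeasurable_gagliardoDensity {v : Eu N → ℝ} (hv : AEMeasurable v) :
    AEMeasurable (gagliardoDensity N s p v) (volume.prod volume) := by
  have hdiff := hv.sub_comp_fst_snd
  unfold gagliardoDensity
  fun_prop

lemma aemeasurable_pairingDensity {u φ : Eu N → ℝ} (hu : AEMeasurable u)
    (hφ : AEMeasurable φ) :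
    AEMeasurable (pairingDensity N s p u φ) (volume.prod volume) := by
  have hudiff := hu.sub_comp_fst_snd
  have hφdiff := hφ.sub_comp_fst_snd
  unfold pairingDensity
  fun_prop

lemma gagliardoDensity_nonneg (v : Eu N → ℝ) (z : Eu N × Eu N) :
    0 ≤ gagliardoDensity N s p v z := by
  unfold gagliardoDensity
  positivity

lemma gagliardoE_eq_lintegral_prod {v : Eu N → ℝ} (hv : AEMeasurable v) :
    gagliardoE N s p v =
      ∫⁻ z, ENNReal.ofReal (gagliardoDensity N s p v z) ∂(volume.prod volume) :=
  lintegral_lintegral (ENNReal.measurable_ofReal.comp_aemeasurable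
    (aemeasurable_gagliardoDensity hv))

lemma integrable_gagliardoDensity {v : Eu N → ℝ} (hv : AEMeasurable v)
    (hG : gagliardoE N s p v ≠ ⊤) :
    Integrable (gagliardoDensity N s p v) (volume.prod volume) := by
  refine ⟨(aemeasurable_gagliardoDensity hv).aestronglyMeasurable, ?_⟩
  rw [hasFiniteIntegral_iff_ofReal (Filter.Eventually.of_forall (gagliardoDensity_nonneg v)),
    ← gagliardoE_eq_lintegral_prod hv]
  exact hG.lt_top

lemma integral_gagliardoDensity {v : Eu N → ℝ} (hv : AEMeasurable v) :
    ∫ z, gagliardoDensity N s p v z ∂(volume.prod volume) = (gagliardoE N s p v).toReal := by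
  rw [integral_eq_lintegral_of_nonneg_ae (Filter.Eventually.of_forall (gagliardoDensity_nonneg v))
    (aemeasurable_gagliardoDensity hv).aestronglyMeasurable, gagliardoE_eq_lintegral_prod hv]

lemma abs_pairingDensity_le (hp : 1 ≤ p) (u φ : Eu N → ℝ) (z : Eu N × Eu N) :
    |pairingDensity N s p u φ z| ≤ gagliardoDensity N s p u z + gagliardoDensity N s p φ z := by
  unfold pairingDensity gagliardoDensity
  rw [abs_div, abs_of_nonneg (by positivity : 0 ≤ dist z.1 z.2 ^ ((N : ℝ) + p * s)),
    ← add_div]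
  gcongr
  exact abs_rpow_sub_two_mul_mul_le hp _ _

lemma integrable_pairingDensity (hp : 1 ≤ p) {u φ : Eu N → ℝ} (hu : AEMeasurable u)
    (hφ : AEMeasurable φ) (hGu : gagliardoE N s p u ≠ ⊤) (hGφ : gagliardoE N s p φ ≠ ⊤) :
    Integrable (pairingDensity N s p u φ) (volume.prod volume) :=
  ((integrable_gagliardoDensity hu hGu).add (integrable_gagliardoDensity hφ hGφ)).mono'
    (aemeasurable_pairingDensity hu hφ).aestronglyMeasurable
    (Filter.Eventually.of_forall (abs_pairingDensity_le hp u φ))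

lemma fracPairing_eq_integral_pairingDensity {u φ : Eu N → ℝ}
    (h : Integrable (pairingDensity N s p u φ) (volume.prod volume)) :
    fracPairing N s p u φ = ∫ z, pairingDensity N s p u φ z ∂(volume.prod volume) :=
  (integral_prod _ h).symm

lemma gagliardoE_comp_le {T : ℝ → ℝ} (hT : LipschitzWith 1 T) (hp : 0 ≤ p) (u : Eu N → ℝ) :
    gagliardoE N s p (fun x => T (u x)) ≤ gagliardoE N s p u := by
  refine lintegral_mono fun x => lintegral_mono fun y => ENNReal.ofReal_le_ofReal ?_
  have hlip : |T (u x) - T (u y)| ≤ |u x - u y| := by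
    simpa [Real.dist_eq] using hT.dist_le_mul (u x) (u y)
  gcongr

lemma MemW0.comp {Ω : Set (Eu N)} {T : ℝ → ℝ} (hT : LipschitzWith 1 T) (hT0 : T 0 = 0)
    (hp : 0 ≤ p) {u : Eu N → ℝ} (hu : MemW0 N s p Ω u) :
    MemW0 N s p Ω (fun x => T (u x)) := by
  obtain ⟨hLp, hG, hzero⟩ := hu
  refine ⟨hLp.of_le (hT.continuous.comp_aestronglyMeasurable hLp.1)
      (Filter.Eventually.of_forall fun x => ?_), (gagliardoE_comp_le hT hp u).trans_lt hG, ?_⟩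
  · simpa [hT0] using hT.dist_le_mul (u x) 0
  · filter_upwards [hzero] with x hx hxΩ
    rw [hx hxΩ, hT0]

lemma gagliardoE_comp_toReal_le_fracPairing {T : ℝ → ℝ} (hT : Monotone T)
    (hTL : LipschitzWith 1 T) (hp : 1 ≤ p) {u : Eu N → ℝ} (hu : AEMeasurable u)
    (hG : gagliardoE N s p u ≠ ⊤) :
    (gagliardoE N s p (fun x => T (u x))).toReal ≤ fracPairing N s p u (fun x => T (u x)) := by
  have hTu : AEMeasurable (fun x => T (u x)) := hTL.continuous.measurable.comp_aemeasurable hu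
  have hGT : gagliardoE N s p (fun x => T (u x)) ≠ ⊤ :=
    ((gagliardoE_comp_le hTL (by linarith) u).trans_lt hG.lt_top).ne
  rw [← integral_gagliardoDensity hTu, fracPairing_eq_integral_pairingDensity
    (integrable_pairingDensity hp hu hTu hG hGT)]
  refine integral_mono (integrable_gagliardoDensity hTu hGT)
    (integrable_pairingDensity hp hu hTu hG hGT) fun z => ?_
  unfold gagliardoDensity pairingDensity
  gcongr
  exact abs_sub_rpow_le_of_monotone_of_lipschitzWith_one hT hTL hp _ _

lemma ae_ae_eq_of_gagliardoE_eq_zero [Nontrivial (Eu N)] (hp : p ≠ 0) {v : Eu N → ℝ}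
    (hv : AEMeasurable v) (hG : gagliardoE N s p v = 0) :
    ∀ᵐ x, ∀ᵐ y, v x = v y := by
  rw [gagliardoE_eq_lintegral_prod hv] at hG
  have hzero : ∀ᵐ z ∂(volume.prod volume), gagliardoDensity N s p v z = 0 := by
    filter_upwards [(lintegral_eq_zero_iff' (ENNReal.measurable_ofReal.comp_aemeasurable
      (aemeasurable_gagliardoDensity hv))).1 hG] with z hz
    exact le_antisymm (ENNReal.ofReal_eq_zero.1 hz) (gagliardoDensity_nonneg v z)
  filter_upwards [Measure.ae_ae_of_ae_prod hzero] with x hx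
  filter_upwards [hx, compl_mem_ae_iff.2 (measure_singleton x)] with y hxy hyx
  have hdist : dist x y ^ ((N : ℝ) + p * s) ≠ 0 :=
    (Real.rpow_pos_of_pos (dist_pos.2 (Ne.symm hyx)) _).ne'
  rw [gagliardoDensity, div_eq_zero_iff, or_iff_left hdist,
    Real.rpow_eq_zero (abs_nonneg _) hp, abs_eq_zero, sub_eq_zero] at hxy
  exact hxy

end Gagliardo

lemma IsWeakSolution.comp_ae_eq_zero {N : ℕ} {s p : ℝ} {Ω : Set (Eu N)} {g : Eu N → ℝ → ℝ}
    {u : Eu N → ℝ} (hN : 1 ≤ N) (hp : 1 ≤ p) (hΩ : IsBounded Ω) (hΩm : MeasurableSet Ω)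
    {T : ℝ → ℝ} (hT : Monotone T) (hTL : LipschitzWith 1 T) (hT0 : T 0 = 0)
    (hu : IsWeakSolution N s p Ω g u) (hsign : ∀ᵐ x, x ∈ Ω → g x (u x) * T (u x) ≤ 0) :
    (fun x => T (u x)) =ᵐ[volume] 0 := by
  obtain ⟨hW0, hsol⟩ := hu
  have : Nonempty (Fin N) := ⟨⟨0, hN⟩⟩
  have hTu : MemW0 N s p Ω (fun x => T (u x)) := hW0.comp hTL hT0 (by linarith)
  have hpair : fracPairing N s p u (fun x => T (u x)) ≤ 0 := by
    rw [hsol _ hTu]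
    exact setIntegral_nonpos_ae hΩm hsign
  have hG : gagliardoE N s p (fun x => T (u x)) = 0 := by
    have hle := (gagliardoE_comp_toReal_le_fracPairing hT hTL hp hW0.1.1.aemeasurable
      hW0.2.1.ne).trans hpair
    exact ((ENNReal.toReal_eq_zero_iff _).1 (le_antisymm hle ENNReal.toReal_nonneg)).resolve_right
      hTu.2.1.ne
  exact ae_eq_zero_of_ae_ae_eq (hΩ.measure_compl_ne_zero volume)
    (ae_ae_eq_of_gagliardoE_eq_zero (by linarith) hTu.1.1.aemeasurable hG) hTu.2.2

theorem truncated_solutions_are_solutions_general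
    (N : ℕ) (p s : ℝ) (Ω : Set (Eu N))
    (hN : 2 ≤ N) (hp : 2 ≤ p)
    (hΩ : IsC11Domain Ω)
    (b : ℝ) (hb : 0 < b)
    (f : Eu N → ℝ → ℝ)
    (hf0 : ∀ᵐ x, x ∈ Ω → ∀ t ≤ (0 : ℝ), f x t = 0)
    (hfb : ∀ᵐ x, x ∈ Ω → f x b ≤ 0)
    (u : Eu N → ℝ)
    (hu : IsWeakSolution N s p Ω (fun x t => f x (min t b)) u) :
    (∀ᵐ x, x ∈ Ω → 0 ≤ u x ∧ u x ≤ b) ∧ IsWeakSolution N s p Ω f u := by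
  have hΩm : MeasurableSet Ω := hΩ.1.measurableSet
  have hlower : (fun x => min (u x) 0) =ᵐ[volume] 0 := by
    refine hu.comp_ae_eq_zero (by omega) (by linarith) hΩ.2.2.1 hΩm
      (fun _ _ h => min_le_min_right 0 h) (LipschitzWith.id.min_const 0) (min_self 0) ?_
    filter_upwards [hf0] with x hf0x hxΩ
    rcases le_total (u x) 0 with h | h
    · rw [hf0x hxΩ _ ((min_le_left _ _).trans h), zero_mul]
    · rw [min_eq_right h, mul_zero]
  have hupper : (fun x => max (u x - b) 0) =ᵐ[volume] 0 := by
    refine hu.comp_ae_eq_zero (by omega) (by linarith) hΩ.2.2.1 hΩm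
      (fun _ _ h => max_le_max_right 0 (sub_le_sub_right h b))
      ((IsometryEquiv.subRight b).isometry.lipschitz.max_const 0)
      (max_eq_right (by linarith)) ?_
    filter_upwards [hfb] with x hfbx hxΩ
    rcases le_total (u x) b with h | h
    · rw [max_eq_right (by linarith), mul_zero]
    · rw [min_eq_right h]
      exact mul_nonpos_of_nonpos_of_nonneg (hfbx hxΩ) (le_max_right _ _)
  have hbounds : ∀ᵐ x, 0 ≤ u x ∧ u x ≤ b := by
    filter_upwards [hlower, hupper] with x hlow hup
    exact ⟨min_eq_right_iff.1 hlow, sub_nonpos.1 (max_eq_right_iff.1 hup)⟩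
  refine ⟨hbounds.mono fun x hx _ => hx, hu.1, fun φ hφ => ?_⟩
  rw [hu.2 φ hφ]
  refine setIntegral_congr_ae hΩm ?_
  filter_upwards [hbounds] with x hx _
  rw [min_eq_left hx.2]

/-- solutions of the truncated problem satisfy `0 ≤ u ≤ b` and solve the
original problem. -/
theorem truncated_solutions_are_solutions
    (N : ℕ) (p s : ℝ) (Ω : Set (Eu N))
    (hN : 2 ≤ N) (hp : 2 ≤ p) (hs0 : 0 < s) (hs1 : s < 1) (hNps : p * s < (N : ℝ))
    (hΩ : IsC11Domain Ω)
    (b : ℝ) (hb : 0 < b)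
    (f : Eu N → ℝ → ℝ) (hf : IsCaratheodory Ω f)
    (hf0 : ∀ᵐ x, x ∈ Ω → ∀ t ≤ (0 : ℝ), f x t = 0)
    (hfb : ∀ᵐ x, x ∈ Ω → f x b ≤ 0)
    (a : Eu N → ℝ) (ha : MemLinftyOn Ω a)
    (hbd : ∀ᵐ x, x ∈ Ω → ∀ t, 0 ≤ t → t ≤ b → |f x t| ≤ a x)
    (u : Eu N → ℝ)
    (hu : IsWeakSolution N s p Ω (fun x t => f x (min t b)) u) :
    (∀ᵐ x, x ∈ Ω → 0 ≤ u x ∧ u x ≤ b) ∧ IsWeakSolution N s p Ω f u :=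
  truncated_solutions_are_solutions_general N p s Ω hN hp hΩ b hb f hf0 hfb u hu
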